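/- For all ε, ρ, p ∈ (0,1) there exists a constant c > 0 such that for all sufficiently large n the following holds. Let (V, W) be an (ε, ρ)-super-regular pair of disjoint vertex sets in a digraph, with |V| = |W| = n. Form a random spanning subdigraph by keeping each edge directed from V to W independently with probability p. Then, with probability at least 1 − exp(−c·pρn), the pair (V, W) is (ε, pρ/2)-super-regular in the resulting digraph. -/

import Mathlib

/-!
STATEMENT 11: For all ε, ρ, p ∈ (0,1) there exists c > 0 such that for all sufficiently
large n: if (V, W) is an (ε, ρ)-super-regular pair of disjoint sets of size n in a
digraph, and each edge directed from V to W is kept independently with probability p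
(all other edges kept), then with probability at least 1 − exp(−c·pρn) the pair (V, W)
is (ε, pρ/2)-super-regular in the resulting digraph.
-/

open Finset

-- Probability of an event under a weight function on a finite sample space.
open scoped Classical in
noncomputable def pr {Ω : Type*} [Fintype Ω] (w : Ω → ℝ) (E : Ω → Prop) : ℝ :=
  ∑ ω : Ω, if E ω then w ω else 0

/-- The number of edges directed from `A` to `B` in the digraph with edge relation `E`. -/
noncomputable def eCount {V : Type*} (E : V → V → Prop) (A B : Finset V) : ℕ :=
  {p : V × V | p.1 ∈ A ∧ p.2 ∈ B ∧ E p.1 p.2}.ncard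

/-- The density of the pair `(A, B)`. -/
noncomputable def dens {V : Type*} (E : V → V → Prop) (A B : Finset V) : ℝ :=
  (eCount E A B : ℝ) / ((A.card : ℝ) * (B.card : ℝ))

/-- The pair `(A, B)` is `ε`-regular. -/
def EpsRegular {V : Type*} (ε : ℝ) (E : V → V → Prop) (A B : Finset V) : Prop :=
  ∀ A' ⊆ A, ∀ B' ⊆ B, ε * A.card ≤ A'.card → ε * B.card ≤ B'.card →
    |dens E A' B' - dens E A B| < ε

/-- The pair `(A, B)` is `(ε, ρ)`-super-regular: it is `ε`-regular, every vertex of `A`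
has at least `ρ|B|` out-neighbours in `B` and every vertex of `B` has at least `ρ|A|`
in-neighbours in `A`. -/
def SuperRegular {V : Type*} (ε ρ : ℝ) (E : V → V → Prop) (A B : Finset V) : Prop :=
  EpsRegular ε E A B ∧
    (∀ v ∈ A, ρ * B.card ≤ ({w : V | w ∈ B ∧ E v w}.ncard : ℝ)) ∧
    (∀ w ∈ B, ρ * A.card ≤ ({v : V | v ∈ A ∧ E v w}.ncard : ℝ))

/-!
Let `X_S` be the number of kept edges in a fixed set `S` of edges. Its moment generating
function is `(1 + p(eᵗ - 1))^|S|`, which gives Chernoff bounds for both tails of `X_S`.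
For `A' ⊆ A`, `B' ⊆ B` with `|A'|, |B'| ≥ εn`, the probability that `X_S` for `S = E(A', B')`
deviates from `p|S|` by more than `(1 - p)ε/2 · |A'||B'|` is `exp(-Ω(n²))`, which beats the
`4ⁿ` choices of such a pair. Outside these events every large-pair density is `p` times the
old one up to `(1 - p)ε/2`, so regularity survives with the same `ε` because
`2 · (1 - p)ε/2 + pε = ε`. A vertex of degree at least `ρn` keeps fewer than half of its
expected `p · deg` edges with probability at most `exp(-pρn/16)`, and a union bound over the
`2n` vertices gives the degree condition.
-/

open Real

section Probability

variable {Ω : Type*} [Fintype Ω] {w : Ω → ℝ}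

lemma pr_mono (hw : 0 ≤ w) {E F : Ω → Prop} (h : ∀ ω, E ω → F ω) :
    pr w E ≤ pr w F := by
  classical
  refine sum_le_sum fun ω _ => ?_
  by_cases hE : E ω
  · simp [hE, h ω hE]
  · simp only [hE, if_false]
    split_ifs
    exacts [hw ω, le_rfl]

lemma pr_or_le (hw : 0 ≤ w) (E F : Ω → Prop) :
    pr w (fun ω => E ω ∨ F ω) ≤ pr w E + pr w F := by
  classical
  rw [pr, pr, pr, ← sum_add_distrib]
  refine sum_le_sum fun ω _ => ?_
  have hwω : 0 ≤ w ω := hw ω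
  by_cases hE : E ω <;> by_cases hF : F ω <;> simp [hE, hF, hwω]

lemma pr_exists_le_sum (hw : 0 ≤ w) {α : Type*} (s : Finset α) (E : α → Ω → Prop) :
    pr w (fun ω => ∃ i ∈ s, E i ω) ≤ ∑ i ∈ s, pr w (E i) := by
  classical
  induction s using Finset.induction_on with
  | empty => simp [pr]
  | insert a s ha ih =>
    rw [sum_insert ha]
    calc pr w (fun ω => ∃ i ∈ insert a s, E i ω)
        ≤ pr w (fun ω => E a ω ∨ ∃ i ∈ s, E i ω) := pr_mono hw fun ω => by simp
      _ ≤ _ := (pr_or_le hw _ _).trans (by gcongr)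

lemma pr_not (hw : ∑ ω, w ω = 1) (E : Ω → Prop) : pr w (fun ω => ¬ E ω) = 1 - pr w E := by
  classical
  rw [eq_sub_iff_add_eq, pr, pr, ← sum_add_distrib, ← hw]
  refine sum_congr rfl fun ω _ => ?_
  by_cases hE : E ω <;> simp [hE]

lemma pr_le_exp_mul_sum (hw : 0 ≤ w) (X : Ω → ℝ) (t a : ℝ) {E : Ω → Prop}
    (hE : ∀ ω, E ω → t * a ≤ t * X ω) :
    pr w E ≤ exp (-(t * a)) * ∑ ω, w ω * exp (t * X ω) := by
  classical
  rw [mul_sum]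
  refine sum_le_sum fun ω _ => ?_
  split_ifs with h
  · calc w ω = exp (-(t * a)) * (w ω * exp (t * a)) := by
          rw [mul_left_comm, ← exp_add]; simp
      _ ≤ exp (-(t * a)) * (w ω * exp (t * X ω)) := by
          gcongr _ * (_ * exp ?_)
          · exact hw ω
          · exact hE ω h
  · exact mul_nonneg (exp_nonneg _) (mul_nonneg (hw ω) (exp_nonneg _))

end Probability

section Bernoulli

variable {ι : Type*} [Fintype ι] {p : ℝ}

variable (p) in
noncomputable def bernoulliWeight (ω : ι → Bool) : ℝ :=
  ∏ e, if ω e = true then p else 1 - p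

def keptCount (S : Finset ι) (ω : ι → Bool) : ℕ :=
  #{e ∈ S | ω e = true}

lemma bernoulliWeight_nonneg (hp0 : 0 ≤ p) (hp1 : p ≤ 1) : 0 ≤ bernoulliWeight (ι := ι) p :=
  fun ω => prod_nonneg fun e _ => by split_ifs <;> linarith

lemma sum_pi_bool_prod [DecidableEq ι] (g : ι → Bool → ℝ) :
    ∑ ω : ι → Bool, ∏ e, g e (ω e) = ∏ e, (g e true + g e false) := by
  rw [← Fintype.prod_sum g]
  simp

lemma sum_bernoulliWeight_mul_exp_keptCount [DecidableEq ι] (S : Finset ι) (t : ℝ) :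
    ∑ ω, bernoulliWeight p ω * exp (t * keptCount S ω) = (1 + p * (exp t - 1)) ^ #S := by
  have hfactor : ∀ ω : ι → Bool, bernoulliWeight p ω * exp (t * keptCount S ω) =
      ∏ e, (if ω e = true then p else 1 - p) *
        (if e ∈ S then (if ω e = true then exp t else 1) else 1) := by
    intro ω
    rw [prod_mul_distrib, prod_ite_mem, univ_inter, bernoulliWeight,
      keptCount, card_filter]
    push_cast
    rw [mul_sum, exp_sum]
    congr 1
    refine prod_congr rfl fun e _ => ?_
    split_ifs <;> simp
  simp_rw [hfactor]
  rw [sum_pi_bool_prod (fun e b => (if b = true then p else 1 - p) *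
    (if e ∈ S then (if b = true then exp t else 1) else 1))]
  calc _ = ∏ e, if e ∈ S then 1 + p * (exp t - 1) else 1 :=
        prod_congr rfl fun e _ => by by_cases he : e ∈ S <;> simp [he]; ring
    _ = _ := by rw [prod_ite_mem, univ_inter, prod_const]

lemma sum_bernoulliWeight [DecidableEq ι] : ∑ ω, bernoulliWeight (ι := ι) p ω = 1 := by
  simpa using sum_bernoulliWeight_mul_exp_keptCount (p := p) (∅ : Finset ι) 0

end Bernoulli

section Chernoff

variable {ι : Type*} [Fintype ι] [DecidableEq ι] {p : ℝ}

lemma sum_bernoulliWeight_mul_exp_keptCount_le (hp0 : 0 ≤ p) (hp1 : p ≤ 1) (S : Finset ι)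
    {t : ℝ} (ht : |t| ≤ 1) :
    ∑ ω, bernoulliWeight p ω * exp (t * keptCount S ω) ≤ exp (p * #S * (t + t ^ 2)) := by
  have hexp : exp t - 1 ≤ t + t ^ 2 := by
    have := (abs_le.1 (Real.norm_exp_sub_one_sub_id_le ht)).2
    simp only [Real.norm_eq_abs, sq_abs] at this
    linarith
  rw [sum_bernoulliWeight_mul_exp_keptCount, mul_comm _ (#S : ℝ), mul_assoc, exp_nat_mul]
  refine pow_le_pow_left₀ (by nlinarith [exp_pos t]) ?_ _
  calc 1 + p * (exp t - 1) ≤ p * (t + t ^ 2) + 1 := by nlinarith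
    _ ≤ exp (p * (t + t ^ 2)) := add_one_le_exp _

lemma pr_keptCount_tail_le (hp0 : 0 ≤ p) (hp1 : p ≤ 1) (S : Finset ι) {t : ℝ}
    (ht : |t| ≤ 1) (a : ℝ) {E : (ι → Bool) → Prop}
    (hE : ∀ ω, E ω → t * a ≤ t * keptCount S ω) :
    pr (bernoulliWeight p) E ≤ exp (-(t * a) + p * #S * (t + t ^ 2)) := by
  rw [exp_add]
  exact (pr_le_exp_mul_sum (bernoulliWeight_nonneg hp0 hp1) _ t a hE).trans <|
    mul_le_mul_of_nonneg_left (sum_bernoulliWeight_mul_exp_keptCount_le hp0 hp1 S ht)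
      (exp_nonneg _)

lemma pr_keptCount_le_sub_le (hp0 : 0 ≤ p) (hp1 : p ≤ 1) (S : Finset ι) (s : ℝ) {t : ℝ}
    (ht0 : 0 ≤ t) (ht1 : t ≤ 1) :
    pr (bernoulliWeight p) (fun ω => (keptCount S ω : ℝ) ≤ p * #S - s) ≤
      exp (-(t * s) + p * #S * t ^ 2) := by
  have ht : |-t| ≤ 1 := by rw [abs_neg, abs_le]; constructor <;> linarith
  refine (pr_keptCount_tail_le hp0 hp1 S ht (p * #S - s)
    fun ω (hω : (keptCount S ω : ℝ) ≤ p * #S - s) => by nlinarith).trans_eq ?_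
  congr 1
  ring

lemma pr_add_le_keptCount_le (hp0 : 0 ≤ p) (hp1 : p ≤ 1) (S : Finset ι) (s : ℝ) {t : ℝ}
    (ht0 : 0 ≤ t) (ht1 : t ≤ 1) :
    pr (bernoulliWeight p) (fun ω => p * #S + s ≤ (keptCount S ω : ℝ)) ≤
      exp (-(t * s) + p * #S * t ^ 2) := by
  have ht : |t| ≤ 1 := by rw [abs_le]; constructor <;> linarith
  refine (pr_keptCount_tail_le hp0 hp1 S ht (p * #S + s)
    fun ω (hω : p * #S + s ≤ (keptCount S ω : ℝ)) => by nlinarith).trans_eq ?_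
  congr 1
  ring

lemma pr_keptCount_lt_half_le (hp0 : 0 ≤ p) (hp1 : p ≤ 1) {S : Finset ι} {d : ℝ}
    (hd : d ≤ #S) :
    pr (bernoulliWeight p) (fun ω => (keptCount S ω : ℝ) < p * #S / 2) ≤
      exp (-(p * d / 16)) :=
  calc _ ≤ pr (bernoulliWeight p) (fun ω => (keptCount S ω : ℝ) ≤ p * #S - p * #S / 2) :=
        pr_mono (bernoulliWeight_nonneg hp0 hp1) fun ω hω => by linarith
    _ ≤ exp (-(1 / 4 * (p * #S / 2)) + p * #S * (1 / 4) ^ 2) :=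
        pr_keptCount_le_sub_le hp0 hp1 S _ (by norm_num) (by norm_num)
    _ ≤ exp (-(p * d / 16)) := exp_le_exp.2 <| by nlinarith

lemma pr_mul_lt_abs_keptCount_sub_le (hp0 : 0 ≤ p) (hp1 : p ≤ 1) (S : Finset ι) {δ M : ℝ}
    (hδ0 : 0 ≤ δ) (hδ2 : δ ≤ 2) (hSM : #S ≤ M) :
    pr (bernoulliWeight p) (fun ω => δ * M < |(keptCount S ω : ℝ) - p * #S|) ≤
      2 * exp (-(δ ^ 2 * M / 4)) := by
  have hw := bernoulliWeight_nonneg (ι := ι) hp0 hp1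
  have hexp : -(δ / 2 * (δ * M)) + p * #S * (δ / 2) ^ 2 ≤ -(δ ^ 2 * M / 4) := by
    have : p * #S ≤ M := by nlinarith [(#S).cast_nonneg (α := ℝ)]
    nlinarith [sq_nonneg δ]
  calc _ ≤ pr (bernoulliWeight p) (fun ω => p * #S + δ * M ≤ (keptCount S ω : ℝ) ∨
        (keptCount S ω : ℝ) ≤ p * #S - δ * M) :=
        pr_mono hw fun ω hω => by
          rcases lt_abs.1 hω with h | h
          · exact Or.inl (by linarith)
          · exact Or.inr (by linarith)
    _ ≤ exp (-(δ / 2 * (δ * M)) + p * #S * (δ / 2) ^ 2) +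
          exp (-(δ / 2 * (δ * M)) + p * #S * (δ / 2) ^ 2) :=
        (pr_or_le hw _ _).trans <| add_le_add
          (pr_add_le_keptCount_le hp0 hp1 S _ (by linarith) (by linarith))
          (pr_keptCount_le_sub_le hp0 hp1 S _ (by linarith) (by linarith))
    _ ≤ 2 * exp (-(δ ^ 2 * M / 4)) := by linarith [exp_le_exp.2 hexp]

end Chernoff

section Digraph

variable {V : Type*} (E : V → V → Prop)

open scoped Classical in
noncomputable def edgesBetween (A B : Finset V) : Finset (V × V) :=
  {q ∈ A ×ˢ B | E q.1 q.2}

def sampleEdges (A B : Finset V) (ω : V × V → Bool) : V → V → Prop :=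
  fun x y => E x y ∧ ((x ∈ A ∧ y ∈ B) → ω (x, y) = true)

lemma eCount_eq_card_edgesBetween (A B : Finset V) : eCount E A B = #(edgesBetween E A B) := by
  classical
  rw [eCount, ← Set.ncard_coe_finset]
  congr 1
  ext q
  simp [edgesBetween, and_assoc]

lemma card_edgesBetween_le (A B : Finset V) : #(edgesBetween E A B) ≤ #A * #B := by
  classical
  exact (card_filter_le _ _).trans_eq (card_product A B)

lemma eCount_sampleEdges {A B A' B' : Finset V} (hA' : A' ⊆ A) (hB' : B' ⊆ B)
    (ω : V × V → Bool) :
    eCount (sampleEdges E A B ω) A' B' = keptCount (edgesBetween E A' B') ω := by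
  classical
  rw [eCount_eq_card_edgesBetween, keptCount]
  congr 1
  ext q
  rw [edgesBetween, edgesBetween, mem_filter, mem_filter, mem_filter, mem_product]
  constructor
  · rintro ⟨⟨hq₁, hq₂⟩, he, hω⟩
    exact ⟨⟨⟨hq₁, hq₂⟩, he⟩, hω ⟨hA' hq₁, hB' hq₂⟩⟩
  · rintro ⟨⟨⟨hq₁, hq₂⟩, he⟩, hω⟩
    exact ⟨⟨hq₁, hq₂⟩, he, fun _ => hω⟩

lemma ncard_outNeighbors_eq_eCount (v : V) (B : Finset V) :
    {w | w ∈ B ∧ E v w}.ncard = eCount E {v} B := by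
  rw [eCount, ← Set.ncard_image_of_injective _ (Prod.mk_right_injective v)]
  congr 1
  ext ⟨x, y⟩
  aesop

lemma ncard_inNeighbors_eq_eCount (A : Finset V) (w : V) :
    {v | v ∈ A ∧ E v w}.ncard = eCount E A {w} := by
  rw [eCount, ← Set.ncard_image_of_injective _ (Prod.mk_left_injective w)]
  congr 1
  ext ⟨x, y⟩
  aesop

end Digraph

section Transfer

variable {V : Type*} {E : V → V → Prop} {A B : Finset V} {ε ρ p : ℝ} {ω : V × V → Bool}

lemma abs_sub_lt_of_abs_sub_mul_le {x x' y y' δ : ℝ} (hp : 0 < p) (hx : |x - p * y| ≤ δ)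
    (hx' : |x' - p * y'| ≤ δ) (hy : |y - y'| < ε) : |x - x'| < 2 * δ + p * ε :=
  calc |x - x'| = |(x - p * y) + p * (y - y') + (p * y' - x')| := by ring_nf
    _ ≤ |x - p * y| + |p * (y - y')| + |p * y' - x'| := abs_add_three _ _ _
    _ < δ + p * ε + δ := by
        rw [abs_mul, abs_of_pos hp, abs_sub_comm (p * y')]
        have := mul_lt_mul_of_pos_left hy hp
        linarith
    _ = 2 * δ + p * ε := by ring

lemma abs_dens_sampleEdges_sub_le {A' B' : Finset V} (hA' : A' ⊆ A) (hB' : B' ⊆ B) {δ : ℝ}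
    (hδ : 0 ≤ δ)
    (h : |(keptCount (edgesBetween E A' B') ω : ℝ) - p * #(edgesBetween E A' B')| ≤
      δ * (#A' * #B')) :
    |dens (sampleEdges E A B ω) A' B' - p * dens E A' B'| ≤ δ := by
  rw [_root_.dens, _root_.dens, eCount_sampleEdges E hA' hB', eCount_eq_card_edgesBetween,
    mul_div_assoc', ← sub_div, abs_div, abs_of_nonneg (by positivity : (0 : ℝ) ≤ #A' * #B')]
  exact div_le_of_le_mul₀ (by positivity) hδ h

lemma epsRegular_sampleEdges (hreg : EpsRegular ε E A B) (hε0 : 0 ≤ ε) (hε1 : ε ≤ 1)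
    (hp0 : 0 < p) (hp1 : p ≤ 1)
    (hpair : ∀ A' ⊆ A, ∀ B' ⊆ B, ε * #A ≤ #A' → ε * #B ≤ #B' →
      |(keptCount (edgesBetween E A' B') ω : ℝ) - p * #(edgesBetween E A' B')| ≤
        (1 - p) * ε / 2 * (#A' * #B')) :
    EpsRegular ε (sampleEdges E A B ω) A B := by
  have hδ : 0 ≤ (1 - p) * ε / 2 := by nlinarith
  have hdens : ∀ A' ⊆ A, ∀ B' ⊆ B, ε * #A ≤ #A' → ε * #B ≤ #B' →
      |dens (sampleEdges E A B ω) A' B' - p * dens E A' B'| ≤ (1 - p) * ε / 2 :=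
    fun A' hA' B' hB' hA'size hB'size =>
      abs_dens_sampleEdges_sub_le hA' hB' hδ (hpair A' hA' B' hB' hA'size hB'size)
  have hwhole : ε * #A ≤ #A := mul_le_of_le_one_left (by positivity) hε1
  have hwhole' : ε * #B ≤ #B := mul_le_of_le_one_left (by positivity) hε1
  intro A' hA' B' hB' hA'size hB'size
  calc _ < 2 * ((1 - p) * ε / 2) + p * ε :=
        abs_sub_lt_of_abs_sub_mul_le hp0 (hdens A' hA' B' hB' hA'size hB'size)
          (hdens A le_rfl B le_rfl hwhole hwhole') (hreg A' hA' B' hB' hA'size hB'size)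
    _ = ε := by ring

lemma superRegular_sampleEdges (hsr : SuperRegular ε ρ E A B) (hε0 : 0 ≤ ε) (hε1 : ε ≤ 1)
    (hp0 : 0 < p) (hp1 : p ≤ 1)
    (hpair : ∀ A' ⊆ A, ∀ B' ⊆ B, ε * #A ≤ #A' → ε * #B ≤ #B' →
      |(keptCount (edgesBetween E A' B') ω : ℝ) - p * #(edgesBetween E A' B')| ≤
        (1 - p) * ε / 2 * (#A' * #B'))
    (hout : ∀ v ∈ A,
      p * #(edgesBetween E {v} B) / 2 ≤ (keptCount (edgesBetween E {v} B) ω : ℝ))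
    (hin : ∀ w ∈ B,
      p * #(edgesBetween E A {w}) / 2 ≤ (keptCount (edgesBetween E A {w}) ω : ℝ)) :
    SuperRegular ε (p * ρ / 2) (sampleEdges E A B ω) A B := by
  obtain ⟨hreg, hdegout, hdegin⟩ := hsr
  refine ⟨epsRegular_sampleEdges hreg hε0 hε1 hp0 hp1 hpair, fun v hv => ?_, fun w hw => ?_⟩
  · have hdeg := hdegout v hv
    rw [ncard_outNeighbors_eq_eCount, eCount_eq_card_edgesBetween] at hdeg
    rw [ncard_outNeighbors_eq_eCount, eCount_sampleEdges E (singleton_subset_iff.2 hv) le_rfl]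
    nlinarith [hout v hv]
  · have hdeg := hdegin w hw
    rw [ncard_inNeighbors_eq_eCount, eCount_eq_card_edgesBetween] at hdeg
    rw [ncard_inNeighbors_eq_eCount, eCount_sampleEdges E le_rfl (singleton_subset_iff.2 hw)]
    nlinarith [hin w hw]

lemma exists_deviation_of_not_superRegular_sampleEdges {n : ℕ} (hε0 : 0 ≤ ε) (hε1 : ε ≤ 1)
    (hp0 : 0 < p) (hp1 : p ≤ 1) (hsr : SuperRegular ε ρ E A B) (hA : #A = n) (hB : #B = n)
    (hbad : ¬ SuperRegular ε (p * ρ / 2) (sampleEdges E A B ω) A B) :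
    (∃ q ∈ A.powerset ×ˢ B.powerset, ε * n ≤ #q.1 ∧ ε * n ≤ #q.2 ∧
      (1 - p) * ε / 2 * (#q.1 * #q.2) <
        |(keptCount (edgesBetween E q.1 q.2) ω : ℝ) - p * #(edgesBetween E q.1 q.2)|) ∨
    (∃ v ∈ A,
      (keptCount (edgesBetween E {v} B) ω : ℝ) < p * #(edgesBetween E {v} B) / 2) ∨
    (∃ w ∈ B,
      (keptCount (edgesBetween E A {w}) ω : ℝ) < p * #(edgesBetween E A {w}) / 2) := by
  by_contra! hgood
  obtain ⟨hpairs, hout, hin⟩ := hgood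
  refine hbad (superRegular_sampleEdges hsr hε0 hε1 hp0 hp1 (fun A' hA' B' hB' hA'n hB'n => ?_)
    hout hin)
  rw [hA] at hA'n
  rw [hB] at hB'n
  exact hpairs (A', B') (mem_product.2 ⟨mem_powerset.2 hA', mem_powerset.2 hB'⟩) hA'n hB'n

end Transfer

section Sampling

variable {V : Type*} [Fintype V] [DecidableEq V] {E : V → V → Prop} {p : ℝ}

lemma pr_large_pair_deviates_le (hp0 : 0 ≤ p) (hp1 : p ≤ 1) (A' B' : Finset V) {δ m : ℝ}
    (hδ0 : 0 ≤ δ) (hδ2 : δ ≤ 2) (hm : 0 ≤ m) :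
    pr (bernoulliWeight p) (fun ω => m ≤ #A' ∧ m ≤ #B' ∧
      δ * (#A' * #B') <
        |(keptCount (edgesBetween E A' B') ω : ℝ) - p * #(edgesBetween E A' B')|) ≤
      2 * exp (-(δ ^ 2 * m ^ 2 / 4)) := by
  have hw := bernoulliWeight_nonneg (ι := V × V) hp0 hp1
  by_cases hsize : m ≤ #A' ∧ m ≤ #B'
  · have hM : (#(edgesBetween E A' B') : ℝ) ≤ #A' * #B' := by
      exact_mod_cast card_edgesBetween_le E A' B'
    calc _ ≤ _ := pr_mono hw fun ω h => h.2.2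
      _ ≤ 2 * exp (-(δ ^ 2 * (#A' * #B') / 4)) :=
          pr_mul_lt_abs_keptCount_sub_le hp0 hp1 _ hδ0 hδ2 hM
      _ ≤ 2 * exp (-(δ ^ 2 * m ^ 2 / 4)) := by
          gcongr
          nlinarith [hsize.1, hsize.2]
  · calc _ ≤ pr (bernoulliWeight p) (fun _ => False) :=
          pr_mono hw fun ω h => hsize ⟨h.1, h.2.1⟩
      _ = 0 := by simp [pr]
      _ ≤ _ := by positivity

lemma pr_not_superRegular_sampleEdges_le {ε ρ : ℝ} {A B : Finset V} {n : ℕ}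
    (hε0 : 0 ≤ ε) (hε1 : ε ≤ 1) (hp0 : 0 < p) (hp1 : p ≤ 1)
    (hsr : SuperRegular ε ρ E A B) (hA : #A = n) (hB : #B = n) :
    pr (bernoulliWeight p)
        (fun ω => ¬ SuperRegular ε (p * ρ / 2) (sampleEdges E A B ω) A B) ≤
      4 ^ n * (2 * exp (-(((1 - p) * ε / 2) ^ 2 * (ε * n) ^ 2 / 4))) +
        2 * n * exp (-(p * (ρ * n) / 16)) := by
  set δ := (1 - p) * ε / 2 with hδ
  have hw := bernoulliWeight_nonneg (ι := V × V) hp0.le hp1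
  have hdegout : ∀ v ∈ A, ρ * n ≤ (#(edgesBetween E {v} B) : ℝ) := fun v hv => by
    simpa [hB, ncard_outNeighbors_eq_eCount, eCount_eq_card_edgesBetween] using hsr.2.1 v hv
  have hdegin : ∀ w ∈ B, ρ * n ≤ (#(edgesBetween E A {w}) : ℝ) := fun w hw => by
    simpa [hA, ncard_inNeighbors_eq_eCount, eCount_eq_card_edgesBetween] using hsr.2.2 w hw
  have hδ0 : 0 ≤ δ := by rw [hδ]; nlinarith
  have hδ2 : δ ≤ 2 := by rw [hδ]; nlinarith
  calc _ ≤ _ := pr_mono hw fun ω =>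
        exists_deviation_of_not_superRegular_sampleEdges hε0 hε1 hp0 hp1 hsr hA hB
    _ ≤ _ := (pr_or_le hw _ _).trans <| add_le_add (pr_exists_le_sum hw _ _) <|
        (pr_or_le hw _ _).trans <| add_le_add (pr_exists_le_sum hw _ _) (pr_exists_le_sum hw _ _)
    _ ≤ #(A.powerset ×ˢ B.powerset) • (2 * exp (-(δ ^ 2 * (ε * n) ^ 2 / 4))) +
          (#A • exp (-(p * (ρ * n) / 16)) + #B • exp (-(p * (ρ * n) / 16))) := by
        gcongr
        · exact sum_le_card_nsmul _ _ _ fun q _ =>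
            pr_large_pair_deviates_le hp0.le hp1 q.1 q.2 hδ0 hδ2 (by positivity)
        · exact sum_le_card_nsmul _ _ _ fun v hv =>
            pr_keptCount_lt_half_le hp0.le hp1 (hdegout v hv)
        · exact sum_le_card_nsmul _ _ _ fun w hw =>
            pr_keptCount_lt_half_le hp0.le hp1 (hdegin w hw)
    _ = _ := by
        simp only [card_product, card_powerset, hA, hB, nsmul_eq_mul]
        push_cast
        rw [← mul_pow]
        norm_num
        ring

end Sampling

section Asymptotics

open Filter

lemma eventually_two_mul_mul_exp_le {b : ℝ} (hb : 0 < b) :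
    ∀ᶠ n : ℕ in atTop, 2 * n * exp (-(2 * b * n)) ≤ exp (-(b * n)) / 2 := by
  have hlin := (isLittleO_pow_exp_pos_mul_atTop 1 hb).bound (by norm_num : (0 : ℝ) < 1 / 4)
  filter_upwards [tendsto_natCast_atTop_atTop.eventually hlin] with n hn
  simp only [pow_one, Real.norm_eq_abs, Nat.abs_cast, abs_exp] at hn
  calc 2 * n * exp (-(2 * b * n)) = 4 * n * exp (-(b * n)) * exp (-(b * n)) / 2 := by
        rw [mul_assoc (4 * (n : ℝ)), ← exp_add]
        ring_nf
    _ ≤ exp (b * n) * exp (-(b * n)) * exp (-(b * n)) / 2 := by gcongr; linarith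
    _ = exp (-(b * n)) / 2 := by
        rw [← exp_add]
        simp

lemma eventually_four_pow_mul_exp_le {κ b : ℝ} (hκ : 0 < κ) :
    ∀ᶠ n : ℕ in atTop, 4 ^ n * (2 * exp (-(κ * n ^ 2))) ≤ exp (-(b * n)) / 2 := by
  filter_upwards [eventually_ge_atTop ⌈(2 * log 4 + b) / κ⌉₊, eventually_ge_atTop 1]
    with n hquad hn1
  have hlog : 0 ≤ log 4 := log_nonneg (by norm_num)
  have hn1' : (1 : ℝ) ≤ n := by exact_mod_cast hn1
  have hκn : 2 * log 4 + b ≤ κ * n := by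
    rw [← div_le_iff₀' hκ]
    exact (Nat.le_ceil _).trans (by exact_mod_cast hquad)
  have hpow : (4 : ℝ) ^ (n + 1) = exp (log 4 * (n + 1)) := by
    rw [← exp_log (by norm_num : (0 : ℝ) < 4), ← exp_nat_mul, exp_log (by norm_num)]
    push_cast
    ring_nf
  calc 4 ^ n * (2 * exp (-(κ * n ^ 2))) = exp (log 4 * (n + 1) - κ * n ^ 2) / 2 := by
        rw [exp_sub, ← hpow, exp_neg]
        ring
    _ ≤ exp (-(b * n)) / 2 := by
        gcongr
        nlinarith

end Asymptotics

theorem super_regular_pair_preserved_under_edge_sampling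
    (ε ρ p : ℝ) (hε : ε ∈ Set.Ioo (0:ℝ) 1) (hρ : ρ ∈ Set.Ioo (0:ℝ) 1)
    (hp : p ∈ Set.Ioo (0:ℝ) 1) :
    ∃ c : ℝ, 0 < c ∧ ∃ N : ℕ, ∀ n : ℕ, N ≤ n →
      ∀ (V : Type) [Fintype V] [DecidableEq V]
        (E : V → V → Prop) (A B : Finset V),
        Disjoint A B → A.card = n → B.card = n →
        SuperRegular ε ρ E A B →
        1 - Real.exp (-(c * (p * ρ * n))) ≤
          pr (fun ω : V × V → Bool => ∏ e : V × V, if ω e = true then p else 1 - p)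
            (fun ω =>
              SuperRegular ε (p * ρ / 2)
                (fun x y => E x y ∧ ((x ∈ A ∧ y ∈ B) → ω (x, y) = true)) A B) := by
  obtain ⟨hε0, hε1⟩ := hε
  obtain ⟨hρ0, -⟩ := hρ
  obtain ⟨hp0, hp1⟩ := hp
  have hκ : 0 < ((1 - p) * ε / 2) ^ 2 * ε ^ 2 / 4 := by
    have : 0 < 1 - p := sub_pos.2 hp1
    positivity
  obtain ⟨N, hN⟩ := Filter.eventually_atTop.1 <|
    (eventually_four_pow_mul_exp_le (b := p * ρ / 32) hκ).and
      (eventually_two_mul_mul_exp_le (by positivity : 0 < p * ρ / 32))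
  refine ⟨1 / 32, by norm_num, N, fun n hn V _ _ E A B _ hA hB hsr => ?_⟩
  have hbad := pr_not_superRegular_sampleEdges_le hε0.le hε1.le hp0 hp1.le hsr hA hB
  rw [pr_not sum_bernoulliWeight] at hbad
  obtain ⟨hpairs, hdegrees⟩ := hN n hn
  change _ ≤ pr (bernoulliWeight p) fun ω => SuperRegular ε _ (sampleEdges E A B ω) A B
  ring_nf at hbad hpairs hdegrees ⊢
  linarith
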